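/- Let X be a topological space, C a category, and f : Sing(X) → N(C) a map of simplicial sets. Fix a homeomorphism between the topological standard 1-simplex and the unit interval [0,1], so that every path a : [0,1] → X determines a singular 1-simplex â ∈ Sing(X)₁. If a and b are paths in X from x to y that are homotopic relative to their endpoints, then f(â) = f(b̂) as 1-simplices of N(C); that is, an ∞-local system on X valued in the nerve of an ordinary category sends homotopic paths to equal morphisms, and hence factors through the fundamental groupoid of X. -/

import Mathlib

open CategoryTheory Simplicial unitInterval

open SimplexCategory NNReal

noncomputable section InftyLocalSystemAux

/-- The underlying type of the topological 0-simplex. -/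
abbrev ILSD0 : Type := (SimplexCategory.toTop.obj (SimplexCategory.mk 0) : Type)
/-- The underlying type of the topological 1-simplex. -/
abbrev ILSD1 : Type := (SimplexCategory.toTop.obj (SimplexCategory.mk 1) : Type)
/-- The underlying type of the topological 2-simplex. -/
abbrev ILSD2 : Type := (SimplexCategory.toTop.obj (SimplexCategory.mk 2) : Type)

/-- The topological realization of a map in the simplex category, as a function. -/
def toTopMap {x y : SimplexCategory} (g : x ⟶ y) :
    SimplexCategory.toTop.{0}.obj x → SimplexCategory.toTop.{0}.obj y :=
  fun p => SimplexCategory.toTop.{0}.map g p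

lemma continuous_toTopMap {x y : SimplexCategory} (g : x ⟶ y) : Continuous (toTopMap g) :=
  (SimplexCategory.toTop.{0}.map g).hom.continuous

/-- The unique point of the topological 0-simplex. -/
def ILSpt0 : ILSD0 := ULift.up (stdSimplex.vertex (0 : Fin 1))

lemma ILSD0_subsingleton (p q : ILSD0) : p = q := Subsingleton.elim p q

/-- The standard affine parameterization of the topological 1-simplex by the unit interval. -/
def ILSst (t : I) : ILSD1 := ULift.up (stdSimplexHomeomorphUnitInterval.symm t)

lemma ILSst_injective : Function.Injective ILSst := fun _ _ hst =>
  stdSimplexHomeomorphUnitInterval.symm.injective (congrArg ULift.down hst)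

lemma ILSst_surjective : Function.Surjective ILSst := fun p =>
  ⟨stdSimplexHomeomorphUnitInterval p.down,
    ULift.ext _ _ (stdSimplexHomeomorphUnitInterval.symm_apply_apply _)⟩

lemma ILSst_continuous : Continuous ILSst :=
  continuous_uliftUp.comp stdSimplexHomeomorphUnitInterval.symm.continuous

/-- The parameterization of the 1-simplex extended to all of `ℝ`. -/
def ILSstR (t : ℝ) : ILSD1 := ILSst (Set.projIcc 0 1 zero_le_one t)

lemma ILSstR_continuous : Continuous ILSstR := ILSst_continuous.comp continuous_projIcc

lemma ILScompl_image (t0 : I) (ht0 : t0 = 0 ∨ t0 = 1) :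
    (setOf fun p : ILSD1 => p ≠ ILSst t0) =
      ILSstR '' (if t0 = 0 then Set.Ioi (0:ℝ) else Set.Iio (1:ℝ)) := by
  ext p
  simp only [Set.mem_setOf_eq, Set.mem_image]
  constructor
  · intro hp
    obtain ⟨t, rfl⟩ := ILSst_surjective p
    have htne : t ≠ t0 := fun hh => hp (by rw [hh])
    refine ⟨(t : ℝ), ?_, by rw [ILSstR, Set.projIcc_val]⟩
    rcases ht0 with h0 | h1
    · rw [if_pos h0]
      subst h0
      exact lt_of_le_of_ne t.2.1 (fun hh => htne (Subtype.ext hh.symm))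
    · rw [h1] at htne ⊢
      simp only [if_neg (by norm_num : ¬ (1:I) = 0)]
      exact lt_of_le_of_ne t.2.2 (fun hh => htne (Subtype.ext hh))
  · rintro ⟨t, ht, rfl⟩
    intro hcon
    have := ILSst_injective hcon
    rcases ht0 with h0 | h1
    · rw [if_pos h0] at ht
      subst h0
      have : (Set.projIcc (0:ℝ) 1 zero_le_one t : ℝ) = 0 := congrArg Subtype.val this
      rw [Set.coe_projIcc] at this
      have h2 : (0:ℝ) < min 1 t := lt_min one_pos ht
      have := le_max_right (0:ℝ) (min 1 t)
      linarith [this, h2, (congrArg id ‹(max 0 (min 1 t) : ℝ) = 0›)]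
    · subst h1
      rw [if_neg (by norm_num : ¬ (1:I) = 0)] at ht
      have : (Set.projIcc (0:ℝ) 1 zero_le_one t : ℝ) = 1 := congrArg Subtype.val this
      rw [Set.coe_projIcc] at this
      have h2 : min 1 t < 1 := min_lt_of_right_lt ht
      have h3 : max 0 (min 1 t) < 1 := max_lt one_pos h2
      linarith

lemma ILScompl_preconnected (t0 : I) (ht0 : t0 = 0 ∨ t0 = 1) :
    IsPreconnected (setOf fun p : ILSD1 => p ≠ ILSst t0) := by
  rw [ILScompl_image t0 ht0]
  split
  · exact isPreconnected_Ioi.image _ ILSstR_continuous.continuousOn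
  · exact isPreconnected_Iio.image _ ILSstR_continuous.continuousOn

/-- A homeomorphism from the 1-simplex to the interval carries vertices to endpoints. -/
lemma ILSendpoint (h : ILSD1 ≃ₜ I) (t0 : I) (ht0 : t0 = 0 ∨ t0 = 1) :
    h (ILSst t0) = 0 ∨ h (ILSst t0) = 1 := by
  by_contra hcon
  push_neg at hcon
  obtain ⟨hα0, hα1⟩ := hcon
  set α : I := h (ILSst t0) with hα
  have hS : _root_.IsPreconnected ((h : ILSD1 → I) '' (setOf fun p : ILSD1 => p ≠ ILSst t0)) :=
    (ILScompl_preconnected t0 ht0).image _ h.continuous.continuousOn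
  have himg : (h : ILSD1 → I) '' (setOf fun p : ILSD1 => p ≠ ILSst t0) = (setOf fun s : I => s ≠ α) := by
    ext s
    simp only [Set.mem_image, Set.mem_setOf_eq]
    constructor
    · rintro ⟨p, hp, rfl⟩
      exact fun hh => hp (h.injective hh)
    · intro hs
      exact ⟨h.symm s, fun hh => hs (by rw [← h.apply_symm_apply s, hh]), h.apply_symm_apply s⟩
  rw [himg] at hS
  have h0lt : (0:ℝ) < (α:ℝ) := lt_of_le_of_ne α.2.1 (fun hh => hα0 (Subtype.ext hh.symm))
  have hlt1 : (α:ℝ) < 1 := lt_of_le_of_ne α.2.2 (fun hh => hα1 (Subtype.ext hh))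
  obtain ⟨s, hsS, hsu, hsv⟩ := hS (setOf fun s : I => (s:ℝ) < α) (setOf fun s : I => (α:ℝ) < (s:ℝ))
    (isOpen_Iio.preimage continuous_subtype_val)
    (isOpen_Ioi.preimage continuous_subtype_val)
    (by
      intro s hs
      rcases lt_or_gt_of_ne (fun hh : (s:ℝ) = (α:ℝ) => hs (Subtype.ext hh)) with hlt | hgt
      · exact Or.inl hlt
      · exact Or.inr hgt)
    ⟨0, fun hh => hα0 ((Subtype.ext (congrArg Subtype.val hh)).symm), h0lt⟩
    ⟨1, fun hh => hα1 ((Subtype.ext (congrArg Subtype.val hh)).symm), hlt1⟩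
  exact absurd ((show (s:ℝ) < α from hsu).trans (show (α:ℝ) < s from hsv)) (lt_irrefl _)

/-- Vertices of the 1-simplex as images of the point under the coface maps. -/
lemma ILSvertex0 : toTopMap (SimplexCategory.δ (1:Fin 2)) ILSpt0 = ILSst 0 := by
  show ULift.up (stdSimplex.map (S := ℝ) (⇑(ConcreteCategory.hom (SimplexCategory.δ (1:Fin 2))))
    (stdSimplex.vertex (0:Fin 1))) = _
  rw [stdSimplex.map_vertex]
  apply ULift.ext
  apply Subtype.ext
  funext i
  fin_cases i <;> simp [ILSst, stdSimplexHomeomorphUnitInterval, stdSimplexEquivIcc] <;> rfl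
lemma ILSvertex1 : toTopMap (SimplexCategory.δ (0:Fin 2)) ILSpt0 = ILSst 1 := by
  show ULift.up (stdSimplex.map (S := ℝ) (⇑(ConcreteCategory.hom (SimplexCategory.δ (0:Fin 2))))
    (stdSimplex.vertex (0:Fin 1))) = _
  rw [stdSimplex.map_vertex]
  apply ULift.ext
  apply Subtype.ext
  funext i
  fin_cases i <;> simp [ILSst, stdSimplexHomeomorphUnitInterval, stdSimplexEquivIcc] <;> rfl

/-- Pointwise functoriality of `toTopMap`. -/
lemma ILSTcomp {x y z : SimplexCategory} (g : x ⟶ y) (g' : y ⟶ z)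
    (p : SimplexCategory.toTop.{0}.obj x) :
    toTopMap g' (toTopMap g p) = toTopMap (g ≫ g') p := by
  rw [toTopMap, toTopMap, toTopMap, Functor.map_comp]; rfl

lemma ILSTid {x : SimplexCategory} (p : SimplexCategory.toTop.{0}.obj x) :
    toTopMap (𝟙 x) p = p := by
  rw [toTopMap, CategoryTheory.Functor.map_id]; rfl

-- composite identities in the simplex category
lemma ILSc1 : SimplexCategory.δ (2:Fin 3) ≫ SimplexCategory.σ (1:Fin 2)
    = 𝟙 (SimplexCategory.mk 1) := by ext i : 3; fin_cases i <;> rfl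
lemma ILSc2 : SimplexCategory.δ (2:Fin 3) ≫ SimplexCategory.σ (0:Fin 2)
    = SimplexCategory.σ (0:Fin 1) ≫ SimplexCategory.δ (1:Fin 2) := by
  ext i : 3; fin_cases i <;> rfl
lemma ILSc3 : SimplexCategory.δ (0:Fin 3) ≫ SimplexCategory.σ (1:Fin 2)
    = SimplexCategory.σ (0:Fin 1) ≫ SimplexCategory.δ (0:Fin 2) := by
  ext i : 3; fin_cases i <;> rfl
lemma ILSc4 : SimplexCategory.δ (0:Fin 3) ≫ SimplexCategory.σ (0:Fin 2)
    = 𝟙 (SimplexCategory.mk 1) := by ext i : 3; fin_cases i <;> rfl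
lemma ILSc5 : SimplexCategory.δ (1:Fin 3) ≫ SimplexCategory.σ (1:Fin 2)
    = 𝟙 (SimplexCategory.mk 1) := by ext i : 3; fin_cases i <;> rfl
lemma ILSc6 : SimplexCategory.δ (1:Fin 3) ≫ SimplexCategory.σ (0:Fin 2)
    = 𝟙 (SimplexCategory.mk 1) := by ext i : 3; fin_cases i <;> rfl

/-- The reparameterization of the interval sending `al` to `0` and `be` to `1`. -/
def ILSrho (al be : I) : C(I, I) :=
  ⟨fun t => Set.projIcc 0 1 zero_le_one (((t:ℝ) - al) / ((be:ℝ) - al)),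
    continuous_projIcc.comp ((continuous_subtype_val.sub continuous_const).div_const _)⟩

lemma ILSrho_left (al be : I) : ILSrho al be al = 0 := by
  show Set.projIcc 0 1 zero_le_one (((al:ℝ) - al) / ((be:ℝ) - al)) = 0
  rw [sub_self, zero_div]
  exact Set.projIcc_left _
lemma ILSrho_right (al be : I) (hne : (be:ℝ) - (al:ℝ) ≠ 0) : ILSrho al be be = 1 := by
  show Set.projIcc 0 1 zero_le_one (((be:ℝ) - al) / ((be:ℝ) - al)) = 1
  rw [div_self hne]
  exact Set.projIcc_right _

-- nerve lemmas
lemma ILSnerveL1 {C : Type} [Category C] (τ : (nerve C).obj (Opposite.op (SimplexCategory.mk 2)))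
    (w : (nerve C).obj (Opposite.op (SimplexCategory.mk 0)))
    (hd : (nerve C).map (SimplexCategory.δ (0:Fin 3)).op τ
        = (nerve C).map (SimplexCategory.σ (0:Fin 1)).op w) :
    (nerve C).map (SimplexCategory.δ (1:Fin 3)).op τ
      = (nerve C).map (SimplexCategory.δ (2:Fin 3)).op τ := by
  have e1 : τ.obj 1 = w.obj 0 := Functor.congr_obj hd 0
  have e2 : τ.obj 2 = w.obj 0 := Functor.congr_obj hd 1
  have hm := Functor.congr_hom hd (homOfLE (by decide) : (0 : Fin 2) ⟶ 1)
  refine ComposableArrows.ext₁ rfl (e2.trans e1.symm) ?_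
  show τ.map (homOfLE (by decide) : (0:Fin 3) ⟶ 2) = _
  have hsplit : (homOfLE (by decide) : (0:Fin 3) ⟶ 2)
      = (homOfLE (by decide) : (0:Fin 3) ⟶ 1) ≫ (homOfLE (by decide) : (1:Fin 3) ⟶ 2) := rfl
  rw [hsplit, τ.map_comp]
  have hm2 : τ.map (homOfLE (by decide) : (1:Fin 3) ⟶ 2)
      = eqToHom e1 ≫ w.map (𝟙 (0 : Fin 1)) ≫ eqToHom e2.symm := hm
  rw [hm2, w.map_id]
  show _ = eqToHom (rfl : τ.obj 0 = τ.obj 0) ≫ τ.map (homOfLE (by decide) : (0:Fin 3) ⟶ 1) ≫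
    eqToHom _
  simp [eqToHom_trans]

lemma ILSnerveL2 {C : Type} [Category C] (τ : (nerve C).obj (Opposite.op (SimplexCategory.mk 2)))
    (w : (nerve C).obj (Opposite.op (SimplexCategory.mk 0)))
    (hd : (nerve C).map (SimplexCategory.δ (2:Fin 3)).op τ
        = (nerve C).map (SimplexCategory.σ (0:Fin 1)).op w) :
    (nerve C).map (SimplexCategory.δ (1:Fin 3)).op τ
      = (nerve C).map (SimplexCategory.δ (0:Fin 3)).op τ := by
  have e1 : τ.obj 0 = w.obj 0 := Functor.congr_obj hd 0
  have e2 : τ.obj 1 = w.obj 0 := Functor.congr_obj hd 1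
  have hm := Functor.congr_hom hd (homOfLE (by decide) : (0 : Fin 2) ⟶ 1)
  refine ComposableArrows.ext₁ (e1.trans e2.symm) rfl ?_
  show τ.map (homOfLE (by decide) : (0:Fin 3) ⟶ 2) = _
  have hsplit : (homOfLE (by decide) : (0:Fin 3) ⟶ 2)
      = (homOfLE (by decide) : (0:Fin 3) ⟶ 1) ≫ (homOfLE (by decide) : (1:Fin 3) ⟶ 2) := rfl
  rw [hsplit, τ.map_comp]
  have hm2 : τ.map (homOfLE (by decide) : (0:Fin 3) ⟶ 1)
      = eqToHom e1 ≫ w.map (𝟙 (0 : Fin 1)) ≫ eqToHom e2.symm := hm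
  rw [hm2, w.map_id]
  show _ = eqToHom _ ≫ τ.map (homOfLE (by decide) : (1:Fin 3) ⟶ 2) ≫ eqToHom _
  simp [eqToHom_trans]

/-- The two singular 2-simplices filling the homotopy square. -/
def ILSsig1 (X : TopCat) (F : C(I × I, X)) (h : ILSD1 ≃ₜ I) (ρ : C(I, I)) :
    C(SimplexCategory.toTop.obj (SimplexCategory.mk 2), X) :=
  ⟨fun p => F (ρ (h (toTopMap (SimplexCategory.σ (0:Fin 2)) p)),
      h (toTopMap (SimplexCategory.σ (1:Fin 2)) p)),
    F.continuous.comp (Continuous.prodMk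
      (ρ.continuous.comp (h.continuous.comp (continuous_toTopMap _)))
      (h.continuous.comp (continuous_toTopMap _)))⟩

def ILSsig2 (X : TopCat) (F : C(I × I, X)) (h : ILSD1 ≃ₜ I) (ρ : C(I, I)) :
    C(SimplexCategory.toTop.obj (SimplexCategory.mk 2), X) :=
  ⟨fun p => F (ρ (h (toTopMap (SimplexCategory.σ (1:Fin 2)) p)),
      h (toTopMap (SimplexCategory.σ (0:Fin 2)) p)),
    F.continuous.comp (Continuous.prodMk
      (ρ.continuous.comp (h.continuous.comp (continuous_toTopMap _)))
      (h.continuous.comp (continuous_toTopMap _)))⟩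

end InftyLocalSystemAux

/-- An `∞`-local system with values in the nerve of an ordinary category sends homotopic
paths to equal morphisms.  Here `h` is a fixed homeomorphism between the topological
standard 1-simplex and the unit interval, so that every path `a` in `X` determines a
singular 1-simplex `a ∘ h` of `Sing X`; if `f : Sing X ⟶ N(C)` is a map of simplicial
sets and `a`, `b` are paths from `x` to `y` that are homotopic relative to their
endpoints, then `f` takes the corresponding 1-simplices of `Sing X` to the same
1-simplex of `N(C)`.  Consequently such a local system factors through the fundamental
groupoid of `X`. -/
theorem infty_local_system_nerve_respects_path_homotopy
    (X : TopCat) (C : Type) [Category C]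
    (h : (SimplexCategory.toTop.obj (SimplexCategory.mk 1) : Type) ≃ₜ I)
    (f : TopCat.toSSet.obj X ⟶ nerve C)
    {x y : X} (a b : Path x y) (hab : a.Homotopic b) :
    f.app (Opposite.op (SimplexCategory.mk 1))
        (ULift.up (TopCat.ofHom (a.toContinuousMap.comp ⟨h, h.continuous⟩ : C(_, _)))) =
      f.app (Opposite.op (SimplexCategory.mk 1))
        (ULift.up (TopCat.ofHom (b.toContinuousMap.comp ⟨h, h.continuous⟩ : C(_, _)))) := by
  obtain ⟨H⟩ := hab
  set α : I := h (ILSst 0) with hαdef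
  set β : I := h (ILSst 1) with hβdef
  have hαβ : (β:ℝ) - (α:ℝ) ≠ 0 := by
    intro hc
    have : α = β := Subtype.ext (by linarith [sub_eq_zero.mp hc])
    exact absurd (ILSst_injective (h.injective this)).symm
      (fun hh => (by norm_num : ¬ ((0:I):ℝ) = 1) (congrArg Subtype.val hh.symm))
  have hαmem : α = 0 ∨ α = 1 := ILSendpoint h 0 (Or.inl rfl)
  have hβmem : β = 0 ∨ β = 1 := ILSendpoint h 1 (Or.inr rfl)
  have hαS : α ∈ ({0, 1} : Set I) := by rcases hαmem with hh | hh <;> simp [hh]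
  have hβS : β ∈ ({0, 1} : Set I) := by rcases hβmem with hh | hh <;> simp [hh]
  set ρ : C(I, I) := ILSrho α β with hρdef
  set S1 : (TopCat.toSSet.obj X).obj (Opposite.op (SimplexCategory.mk 2)) :=
    ULift.up (TopCat.ofHom (ILSsig1 X H.toContinuousMap h ρ)) with hS1
  set S2 : (TopCat.toSSet.obj X).obj (Opposite.op (SimplexCategory.mk 2)) :=
    ULift.up (TopCat.ofHom (ILSsig2 X H.toContinuousMap h ρ)) with hS2
  -- naturality helper
  have hnat : ∀ {m n : SimplexCategory} (g : m ⟶ n)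
      (s : (TopCat.toSSet.obj X).obj (Opposite.op n)),
      f.app (Opposite.op m) ((TopCat.toSSet.obj X).map g.op s)
        = (nerve C).map g.op (f.app (Opposite.op n) s) :=
    fun g s => NatTrans.naturality_apply f g.op s
  -- vertex values of u, v along faces
  have hσ0δ2 : ∀ p : ILSD1, toTopMap (SimplexCategory.σ (0:Fin 2))
      (toTopMap (SimplexCategory.δ (2:Fin 3)) p) = ILSst 0 := by
    intro p
    rw [ILSTcomp, ILSc2, ← ILSTcomp, ILSD0_subsingleton (toTopMap _ p) ILSpt0, ILSvertex0]
  have hσ1δ2 : ∀ p : ILSD1, toTopMap (SimplexCategory.σ (1:Fin 2))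
      (toTopMap (SimplexCategory.δ (2:Fin 3)) p) = p := by
    intro p; rw [ILSTcomp, ILSc1, ILSTid]
  have hσ1δ0 : ∀ p : ILSD1, toTopMap (SimplexCategory.σ (1:Fin 2))
      (toTopMap (SimplexCategory.δ (0:Fin 3)) p) = ILSst 1 := by
    intro p
    rw [ILSTcomp, ILSc3, ← ILSTcomp, ILSD0_subsingleton (toTopMap _ p) ILSpt0, ILSvertex1]
  have hσ0δ0 : ∀ p : ILSD1, toTopMap (SimplexCategory.σ (0:Fin 2))
      (toTopMap (SimplexCategory.δ (0:Fin 3)) p) = p := by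
    intro p; rw [ILSTcomp, ILSc4, ILSTid]
  have hσ1δ1 : ∀ p : ILSD1, toTopMap (SimplexCategory.σ (1:Fin 2))
      (toTopMap (SimplexCategory.δ (1:Fin 3)) p) = p := by
    intro p; rw [ILSTcomp, ILSc5, ILSTid]
  have hσ0δ1 : ∀ p : ILSD1, toTopMap (SimplexCategory.σ (0:Fin 2))
      (toTopMap (SimplexCategory.δ (1:Fin 3)) p) = p := by
    intro p; rw [ILSTcomp, ILSc6, ILSTid]
  -- face computations
  have hface2 : (TopCat.toSSet.obj X).map (SimplexCategory.δ (2:Fin 3)).op S1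
      = ULift.up (TopCat.ofHom (a.toContinuousMap.comp ⟨h, h.continuous⟩ : C(_, _))) := by
    apply ULift.ext
    refine TopCat.hom_ext (ContinuousMap.ext fun p => ?_)
    show H.toContinuousMap (ρ (h (toTopMap (SimplexCategory.σ (0:Fin 2))
        (toTopMap (SimplexCategory.δ (2:Fin 3)) p))),
      h (toTopMap (SimplexCategory.σ (1:Fin 2)) (toTopMap (SimplexCategory.δ (2:Fin 3)) p)))
      = a (h p)
    rw [hσ0δ2 p, hσ1δ2 p, ← hαdef, ILSrho_left]
    exact H.apply_zero (h p)
  have hface0' : (TopCat.toSSet.obj X).map (SimplexCategory.δ (0:Fin 3)).op S1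
      = (TopCat.toSSet.obj X).map (SimplexCategory.σ (0:Fin 1)).op
          (ULift.up (TopCat.ofHom (ContinuousMap.const ILSD0 (a β))) :
          (TopCat.toSSet.obj X).obj (Opposite.op (SimplexCategory.mk 0))) := by
    apply ULift.ext
    refine TopCat.hom_ext (ContinuousMap.ext fun p => ?_)
    show H.toContinuousMap (ρ (h (toTopMap (SimplexCategory.σ (0:Fin 2))
        (toTopMap (SimplexCategory.δ (0:Fin 3)) p))),
      h (toTopMap (SimplexCategory.σ (1:Fin 2)) (toTopMap (SimplexCategory.δ (0:Fin 3)) p)))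
      = a β
    rw [hσ0δ0 p, hσ1δ0 p, ← hβdef]
    exact H.eq_fst _ hβS
  have hface2' : (TopCat.toSSet.obj X).map (SimplexCategory.δ (2:Fin 3)).op S2
      = (TopCat.toSSet.obj X).map (SimplexCategory.σ (0:Fin 1)).op
          (ULift.up (TopCat.ofHom (ContinuousMap.const ILSD0 (a α))) :
          (TopCat.toSSet.obj X).obj (Opposite.op (SimplexCategory.mk 0))) := by
    apply ULift.ext
    refine TopCat.hom_ext (ContinuousMap.ext fun p => ?_)
    show H.toContinuousMap (ρ (h (toTopMap (SimplexCategory.σ (1:Fin 2))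
        (toTopMap (SimplexCategory.δ (2:Fin 3)) p))),
      h (toTopMap (SimplexCategory.σ (0:Fin 2)) (toTopMap (SimplexCategory.δ (2:Fin 3)) p)))
      = a α
    rw [hσ0δ2 p, hσ1δ2 p, ← hαdef]
    exact H.eq_fst _ hαS
  have hface0 : (TopCat.toSSet.obj X).map (SimplexCategory.δ (0:Fin 3)).op S2
      = ULift.up (TopCat.ofHom (b.toContinuousMap.comp ⟨h, h.continuous⟩ : C(_, _))) := by
    apply ULift.ext
    refine TopCat.hom_ext (ContinuousMap.ext fun p => ?_)
    show H.toContinuousMap (ρ (h (toTopMap (SimplexCategory.σ (1:Fin 2))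
        (toTopMap (SimplexCategory.δ (0:Fin 3)) p))),
      h (toTopMap (SimplexCategory.σ (0:Fin 2)) (toTopMap (SimplexCategory.δ (0:Fin 3)) p)))
      = b (h p)
    rw [hσ0δ0 p, hσ1δ0 p, ← hβdef, ILSrho_right _ _ hαβ]
    exact H.apply_one (h p)
  have hdiag : (TopCat.toSSet.obj X).map (SimplexCategory.δ (1:Fin 3)).op S1
      = (TopCat.toSSet.obj X).map (SimplexCategory.δ (1:Fin 3)).op S2 := by
    apply ULift.ext
    refine TopCat.hom_ext (ContinuousMap.ext fun p => ?_)
    show H.toContinuousMap (ρ (h (toTopMap (SimplexCategory.σ (0:Fin 2))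
        (toTopMap (SimplexCategory.δ (1:Fin 3)) p))),
      h (toTopMap (SimplexCategory.σ (1:Fin 2)) (toTopMap (SimplexCategory.δ (1:Fin 3)) p)))
      = H.toContinuousMap (ρ (h (toTopMap (SimplexCategory.σ (1:Fin 2))
        (toTopMap (SimplexCategory.δ (1:Fin 3)) p))),
      h (toTopMap (SimplexCategory.σ (0:Fin 2)) (toTopMap (SimplexCategory.δ (1:Fin 3)) p)))
    rw [hσ0δ1 p, hσ1δ1 p]
  -- assemble in the nerve
  calc f.app (Opposite.op (SimplexCategory.mk 1))
        (ULift.up (TopCat.ofHom (a.toContinuousMap.comp ⟨h, h.continuous⟩ : C(_, _))))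
      = f.app _ ((TopCat.toSSet.obj X).map (SimplexCategory.δ (2:Fin 3)).op S1) := by
        exact congrArg (fun s => f.app _ s) hface2.symm
    _ = (nerve C).map (SimplexCategory.δ (2:Fin 3)).op (f.app _ S1) := hnat _ _
    _ = (nerve C).map (SimplexCategory.δ (1:Fin 3)).op (f.app _ S1) := by
        refine (ILSnerveL1 (f.app _ S1) (f.app _ (ULift.up (TopCat.ofHom (ContinuousMap.const ILSD0 (a β))) :
          (TopCat.toSSet.obj X).obj (Opposite.op (SimplexCategory.mk 0)))) ?_).symm
        exact (hnat _ _).symm.trans ((congrArg (fun s => f.app _ s) hface0').trans (hnat _ _))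
    _ = (nerve C).map (SimplexCategory.δ (1:Fin 3)).op (f.app _ S2) := by
        rw [← hnat, ← hnat, hdiag]
    _ = (nerve C).map (SimplexCategory.δ (0:Fin 3)).op (f.app _ S2) := by
        refine ILSnerveL2 (f.app _ S2) (f.app _ (ULift.up (TopCat.ofHom (ContinuousMap.const ILSD0 (a α))) :
          (TopCat.toSSet.obj X).obj (Opposite.op (SimplexCategory.mk 0)))) ?_
        exact (hnat _ _).symm.trans ((congrArg (fun s => f.app _ s) hface2').trans (hnat _ _))
    _ = f.app _ ((TopCat.toSSet.obj X).map (SimplexCategory.δ (0:Fin 3)).op S2) :=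
        (hnat _ _).symm
    _ = f.app (Opposite.op (SimplexCategory.mk 1))
            (ULift.up (TopCat.ofHom (b.toContinuousMap.comp ⟨h, h.continuous⟩ : C(_, _)))) := by
          exact congrArg (fun s => f.app _ s) hface0
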